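/- Let $v_1,\ldots,v_n$ be nonzero real numbers with $|v_i| \le 1$ and $\varepsilon_1,\ldots,\varepsilon_n$ independent Rademacher variables. Then for every real $x$, $\mathbb{P}(v_1\varepsilon_1 + \cdots + v_n\varepsilon_n = x) \le \binom{n}{\lfloor n/2 \rfloor}/2^n$. (Erdős's Littlewood–Offord theorem) -/

import Mathlib

/-!
Conditioning on the signs splits the event `∑ vᵢ εᵢ = x` (up to a null set) into atoms
`{ε = σ}`, one for each sign vector `σ ∈ {±1}ⁿ`, each of probability `2⁻ⁿ`. Encode `σ` by the set
`T` of coordinates where `σᵢ = sign vᵢ`. Then `∑ vᵢ σᵢ = ∑ |vᵢ| (±1)` is strictly increasing in `T`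
for inclusion, so the sign vectors hitting `x` form an antichain of `Finset (Fin n)`, and by
Sperner's theorem there are at most `n.choose (n / 2)` of them.
-/

open MeasureTheory ProbabilityTheory

/-- A Rademacher random variable takes values `1` and `-1` each with probability `1/2`. -/
def IsRademacher {Ω : Type*} [MeasurableSpace Ω] (μ : Measure Ω) (f : Ω → ℝ) : Prop :=
  μ {ω | f ω = 1} = 1 / 2 ∧ μ {ω | f ω = -1} = 1 / 2

lemma StrictMono.isAntichain_preimage_singleton {α β : Type*} [PartialOrder α] [Preorder β]
    {f : α → β} (hf : StrictMono f) (b : β) : IsAntichain (· ≤ ·) (f ⁻¹' {b}) :=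
  fun _ hs _ ht hne hle ↦ (hf (lt_of_le_of_ne hle hne)).ne (hs.trans ht.symm)

section LittlewoodOfford

open Finset

variable {ι : Type*} [Fintype ι] [DecidableEq ι]

def signPattern (T : Finset ι) (i : ι) : ℝ := if i ∈ T then 1 else -1

lemma signPattern_filter_eq_one {y : ι → ℝ} (hy : ∀ i, y i = 1 ∨ y i = -1) :
    signPattern {i | y i = 1} = y := by
  ext i
  rcases hy i with h | h <;> norm_num [signPattern, h]

lemma abs_mul_signPattern_symmDiff (a : ι → ℝ) (T : Finset ι) (i : ι) :
    |a i| * signPattern (symmDiff T ({j | a j < 0} : Finset ι)) i = a i * signPattern T i := by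
  rcases lt_or_ge (a i) 0 with ha | ha
  · by_cases hT : i ∈ T <;> simp [signPattern, mem_symmDiff, abs_of_neg ha, ha, hT]
  · by_cases hT : i ∈ T <;> simp [signPattern, mem_symmDiff, abs_of_nonneg ha, ha.not_gt, hT]

lemma strictMono_sum_mul_signPattern {a : ι → ℝ} (ha : ∀ i, 0 < a i) :
    StrictMono fun T : Finset ι ↦ ∑ i, a i * signPattern T i := by
  intro S T hST
  obtain ⟨j, hjT, hjS⟩ := exists_of_ssubset hST
  have hle : ∀ i, signPattern S i ≤ signPattern T i := fun i ↦ by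
    unfold signPattern
    split_ifs <;> simp_all [hST.subset _]
  refine sum_lt_sum (fun i _ ↦ mul_le_mul_of_nonneg_left (hle i) (ha i).le) ⟨j, mem_univ j, ?_⟩
  simp only [signPattern, hjS, hjT, if_false, if_true]
  linarith [ha j]

lemma card_filter_sum_mul_signPattern_eq_le {a : ι → ℝ} (ha : ∀ i, a i ≠ 0) (x : ℝ) :
    #{T : Finset ι | ∑ i, a i * signPattern T i = x}
      ≤ (Fintype.card ι).choose (Fintype.card ι / 2) := by
  rw [← card_image_of_injective _ (symmDiff_left_injective ({j | a j < 0} : Finset ι))]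
  refine IsAntichain.sperner <| ((strictMono_sum_mul_signPattern fun i ↦ abs_pos.2 (ha i))
    |>.isAntichain_preimage_singleton x).subset ?_
  simp only [coe_image, coe_filter, Set.image_subset_iff]
  intro T hT
  simpa [abs_mul_signPattern_symmDiff] using hT

variable {Ω : Type*} [MeasurableSpace Ω] {μ : Measure Ω}

lemma IsRademacher.ae_eq_one_or_eq_neg_one [IsProbabilityMeasure μ] {f : Ω → ℝ}
    (hf : Measurable f) (h : IsRademacher μ f) : ∀ᵐ ω ∂μ, f ω = 1 ∨ f ω = -1 := by
  have hdisj : Disjoint {ω | f ω = 1} {ω | f ω = -1} :=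
    Set.disjoint_left.2 fun ω (h₁ : f ω = 1) (h₂ : f ω = -1) ↦ by linarith
  have hunion : μ ({ω | f ω = 1} ∪ {ω | f ω = -1}) = 1 := by
    rw [measure_union hdisj (hf (measurableSet_singleton _)), h.1, h.2, ENNReal.add_halves]
  have hset : {ω | ¬(f ω = 1 ∨ f ω = -1)} = ({ω | f ω = 1} ∪ {ω | f ω = -1})ᶜ := by
    ext; simp
  rw [ae_iff, hset]
  exact (prob_compl_eq_zero_iff ((hf (measurableSet_singleton _)).union
    (hf (measurableSet_singleton _)))).2 hunion

variable {ε : ι → Ω → ℝ}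

lemma measure_eq_signPattern (hindep : iIndepFun ε μ) (hrad : ∀ i, IsRademacher μ (ε i))
    (T : Finset ι) : μ {ω | ∀ i, ε i ω = signPattern T i} = (2 ^ Fintype.card ι)⁻¹ := by
  have hfactor : ∀ i, μ (ε i ⁻¹' {signPattern T i}) = 2⁻¹ := by
    intro i
    unfold signPattern
    split_ifs
    · exact (hrad i).1.trans (one_div 2)
    · exact (hrad i).2.trans (one_div 2)
  calc μ {ω | ∀ i, ε i ω = signPattern T i}
      = μ (⋂ i, ε i ⁻¹' {signPattern T i}) := by congr 1; ext; simp
    _ = ∏ i, μ (ε i ⁻¹' {signPattern T i}) :=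
      hindep.meas_iInter fun i ↦ ⟨_, measurableSet_singleton _, rfl⟩
    _ = (2 ^ Fintype.card ι)⁻¹ := by simp [hfactor, ENNReal.inv_pow]

lemma measure_sum_mul_eq_le_card_div [IsProbabilityMeasure μ] (hmeas : ∀ i, Measurable (ε i))
    (hindep : iIndepFun ε μ) (hrad : ∀ i, IsRademacher μ (ε i)) (a : ι → ℝ) (x : ℝ) :
    μ {ω | ∑ i, a i * ε i ω = x}
      ≤ #{T : Finset ι | ∑ i, a i * signPattern T i = x} / 2 ^ Fintype.card ι := by
  set 𝒜 : Finset (Finset ι) := {T | ∑ i, a i * signPattern T i = x}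
  have hcover :
      {ω | ∑ i, a i * ε i ω = x} ≤ᵐ[μ] ⋃ T ∈ 𝒜, {ω | ∀ i, ε i ω = signPattern T i} := by
    filter_upwards [ae_all_iff.2 fun i ↦ (hrad i).ae_eq_one_or_eq_neg_one (hmeas i)] with ω hω
    intro (hx : ∑ i, a i * ε i ω = x)
    show ω ∈ ⋃ T ∈ 𝒜, {ω | ∀ i, ε i ω = signPattern T i}
    have hpat := signPattern_filter_eq_one hω
    simp only [Set.mem_iUnion]
    refine ⟨({i | ε i ω = 1} : Finset ι), ?_, fun i ↦ by rw [hpat]⟩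
    simpa [𝒜, hpat] using hx
  calc μ {ω | ∑ i, a i * ε i ω = x}
      ≤ μ (⋃ T ∈ 𝒜, {ω | ∀ i, ε i ω = signPattern T i}) := measure_mono_ae hcover
    _ ≤ ∑ T ∈ 𝒜, μ {ω | ∀ i, ε i ω = signPattern T i} := measure_biUnion_finset_le _ _
    _ = #𝒜 / 2 ^ Fintype.card ι := by
      simp [measure_eq_signPattern hindep hrad, div_eq_mul_inv]

theorem measure_sum_mul_rademacher_eq_le [IsProbabilityMeasure μ]
    (hmeas : ∀ i, Measurable (ε i)) (hindep : iIndepFun ε μ)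
    (hrad : ∀ i, IsRademacher μ (ε i)) {a : ι → ℝ} (ha : ∀ i, a i ≠ 0) (x : ℝ) :
    μ {ω | ∑ i, a i * ε i ω = x}
      ≤ (Fintype.card ι).choose (Fintype.card ι / 2) / 2 ^ Fintype.card ι := by
  refine (measure_sum_mul_eq_le_card_div hmeas hindep hrad a x).trans ?_
  gcongr
  exact_mod_cast card_filter_sum_mul_signPattern_eq_le ha x

end LittlewoodOfford

theorem erdos_littlewood_offord_general
    {Ω : Type*} [MeasurableSpace Ω] (μ : Measure Ω) [IsProbabilityMeasure μ]
    (n : ℕ) (v : ℕ → ℝ) (hv0 : ∀ i < n, v i ≠ 0)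
    (ε : ℕ → Ω → ℝ) (hmeas : ∀ i, Measurable (ε i))
    (hindep : iIndepFun ε μ)
    (hrad : ∀ i, IsRademacher μ (ε i))
    (x : ℝ) :
    μ {ω | ∑ i ∈ Finset.range n, v i * ε i ω = x}
      ≤ (n.choose (n / 2) : ENNReal) / 2 ^ n := by
  have h := measure_sum_mul_rademacher_eq_le (ι := Fin n) (ε := fun i ↦ ε i) (fun i ↦ hmeas i)
    (hindep.precomp Fin.val_injective) (fun i ↦ hrad i) (fun i ↦ hv0 i i.isLt) x
  rw [Fintype.card_fin] at h
  convert h using 5 with ω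
  exact (Fin.sum_univ_eq_sum_range (fun i ↦ v i * ε i ω) n).symm

theorem erdos_littlewood_offord
    {Ω : Type*} [MeasurableSpace Ω] (μ : Measure Ω) [IsProbabilityMeasure μ]
    (n : ℕ) (v : ℕ → ℝ) (hv0 : ∀ i < n, v i ≠ 0) (hv1 : ∀ i < n, |v i| ≤ 1)
    (ε : ℕ → Ω → ℝ) (hmeas : ∀ i, Measurable (ε i))
    (hindep : iIndepFun ε μ)
    (hrad : ∀ i, IsRademacher μ (ε i))
    (x : ℝ) :
    μ {ω | ∑ i ∈ Finset.range n, v i * ε i ω = x}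
      ≤ (n.choose (n / 2) : ENNReal) / 2 ^ n :=
  erdos_littlewood_offord_general μ n v hv0 ε hmeas hindep hrad x
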